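/- If y₅ solves y₅' = (k₈ + k₉H₁(y₄))H₂(y₅)H₃(y₇)y₃ − k₃(y₅ − q₅) where each Hᵢ takes values in [0,1], y₃(t) ∈ [0, M₃] for all t, k₃ > 0, k₈, k₉ ≥ 0, q₅ > 0, and 0 ≤ y₅(0) ≤ q₅ + (k₈+k₉)M₃/k₃, then y₅(t) ∈ [q₅·(1 − e^{−k₃t})·0 + min(y₅(0), q₅), q₅ + (k₈+k₉)M₃/k₃] for all t ≥ 0; in particular y₅ remains bounded by q₅ + (k₈+k₉)M₃/k₃. -/

import Mathlib

/-!
Write the equation as `y₅' = P - k₃ (y₅ - q₅)` with forcing `P ∈ [0, (k₈ + k₉) M₃]`.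
Above the level `q₅ + (k₈ + k₉) M₃ / k₃` the right-hand side is negative, and below
`min (y₅ 0) q₅` it is positive, so neither level can be crossed.
-/

open Set

theorem le_of_hasDerivWithinAt_neg_of_lt {f f' : ℝ → ℝ} {a b B : ℝ}
    (hf : ContinuousOn f (Icc a b)) (hf' : ∀ x ∈ Ico a b, HasDerivWithinAt f (f' x) (Ici x) x)
    (ha : f a ≤ B) (hneg : ∀ x ∈ Ico a b, B < f x → f' x < 0) :
    ∀ x ∈ Icc a b, f x ≤ B := by
  intro x hx
  -- Strict comparison with the constant barrier `B + ε`, which `f` could only reach while rising.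
  refine le_of_forall_pos_le_add fun ε hε => ?_
  refine image_le_of_deriv_right_lt_deriv_boundary' (B := fun _ => B + ε) (B' := fun _ => 0)
    hf hf' (by linarith) continuousOn_const (fun _ _ => hasDerivWithinAt_const _ _ _) ?_ hx
  intro y hy hyB
  exact hneg y hy (by linarith)

theorem le_of_hasDerivWithinAt_pos_of_lt {f f' : ℝ → ℝ} {a b B : ℝ}
    (hf : ContinuousOn f (Icc a b)) (hf' : ∀ x ∈ Ico a b, HasDerivWithinAt f (f' x) (Ici x) x)
    (ha : B ≤ f a) (hpos : ∀ x ∈ Ico a b, f x < B → 0 < f' x) :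
    ∀ x ∈ Icc a b, B ≤ f x := by
  intro x hx
  have := le_of_hasDerivWithinAt_neg_of_lt (f := -f) (f' := -f') (B := -B) hf.neg
    (fun y hy => (hf' y hy).neg) (by simpa using ha)
    (fun y hy hy' => by simpa using hpos y hy (by simpa using hy')) x hx
  simpa using this

theorem relaxation_mem_Icc {y P : ℝ → ℝ} {k q C : ℝ} (hk : 0 < k)
    (hP : ∀ t, 0 ≤ t → P t ∈ Icc 0 C)
    (hode : ∀ t, 0 ≤ t → HasDerivAt y (P t - k * (y t - q)) t) (h0 : y 0 ≤ q + C / k) :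
    ∀ t, 0 ≤ t → y t ∈ Icc (min (y 0) q) (q + C / k) := by
  intro t ht
  have hcont : ContinuousOn y (Icc 0 t) := fun s hs => (hode s hs.1).continuousAt.continuousWithinAt
  have hderiv : ∀ s ∈ Ico 0 t, HasDerivWithinAt y (P s - k * (y s - q)) (Ici s) s :=
    fun s hs => (hode s hs.1).hasDerivWithinAt
  have hkC : k * (C / k) = C := mul_div_cancel₀ C hk.ne'
  have hmem : t ∈ Icc 0 t := right_mem_Icc.2 ht
  constructor
  · refine le_of_hasDerivWithinAt_pos_of_lt hcont hderiv (min_le_left _ _) ?_ t hmem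
    intro s hs hys
    have hq : min (y 0) q ≤ q := min_le_right _ _
    nlinarith [(hP s hs.1).1]
  · refine le_of_hasDerivWithinAt_neg_of_lt hcont hderiv h0 ?_ t hmem
    intro s hs hys
    nlinarith [(hP s hs.1).2]

theorem mul_mem_Icc_zero_of_mem_unitInterval {a c h : ℝ} (ha : a ∈ Icc 0 c) (hh : h ∈ Icc 0 1) :
    a * h ∈ Icc 0 c :=
  ⟨mul_nonneg ha.1 hh.1, (mul_le_of_le_one_right ha.1 hh.2).trans ha.2⟩

theorem mul_mem_Icc_zero_mul {a b c d : ℝ} (ha : a ∈ Icc 0 c) (hb : b ∈ Icc 0 d) :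
    a * b ∈ Icc 0 (c * d) :=
  ⟨mul_nonneg ha.1 hb.1, mul_le_mul ha.2 hb.2 hb.1 (ha.1.trans ha.2)⟩

theorem il6_boundedness_general (k₃ k₈ k₉ q₅ M₃ : ℝ) (hk₃ : 0 < k₃) (hk₈ : 0 ≤ k₈) (hk₉ : 0 ≤ k₉)
    (H₁ H₂ H₃ : ℝ → ℝ) (hH₁ : ∀ s, H₁ s ∈ Set.Icc (0:ℝ) 1)
    (hH₂ : ∀ s, H₂ s ∈ Set.Icc (0:ℝ) 1) (hH₃ : ∀ s, H₃ s ∈ Set.Icc (0:ℝ) 1)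
    (y₃ y₄ y₅ y₇ : ℝ → ℝ)
    (hy₃ : ∀ t, 0 ≤ t → y₃ t ∈ Set.Icc 0 M₃)
    (hode : ∀ t, 0 ≤ t → HasDerivAt y₅
      ((k₈ + k₉ * H₁ (y₄ t)) * H₂ (y₅ t) * H₃ (y₇ t) * y₃ t - k₃ * (y₅ t - q₅)) t)
    (h0 : 0 ≤ y₅ 0 ∧ y₅ 0 ≤ q₅ + (k₈ + k₉) * M₃ / k₃) :
    ∀ t, 0 ≤ t → y₅ t ∈ Set.Icc (min (y₅ 0) q₅) (q₅ + (k₈ + k₉) * M₃ / k₃) := by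
  have hrate : ∀ t, k₈ + k₉ * H₁ (y₄ t) ∈ Icc 0 (k₈ + k₉) := fun t => by
    have := mul_mem_Icc_zero_of_mem_unitInterval ⟨hk₉, le_rfl⟩ (hH₁ (y₄ t))
    exact ⟨by linarith [this.1], by linarith [this.2]⟩
  have hforcing : ∀ t, 0 ≤ t →
      (k₈ + k₉ * H₁ (y₄ t)) * H₂ (y₅ t) * H₃ (y₇ t) * y₃ t ∈ Icc 0 ((k₈ + k₉) * M₃) :=
    fun t ht => mul_mem_Icc_zero_mul (mul_mem_Icc_zero_of_mem_unitInterval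
      (mul_mem_Icc_zero_of_mem_unitInterval (hrate t) (hH₂ _)) (hH₃ _)) (hy₃ t ht)
  exact relaxation_mem_Icc hk₃ hforcing hode h0.2

theorem il6_boundedness (k₃ k₈ k₉ q₅ M₃ : ℝ) (hk₃ : 0 < k₃) (hk₈ : 0 ≤ k₈) (hk₉ : 0 ≤ k₉)
    (hq : 0 < q₅) (hM : 0 ≤ M₃)
    (H₁ H₂ H₃ : ℝ → ℝ) (hH₁ : ∀ s, H₁ s ∈ Set.Icc (0:ℝ) 1)
    (hH₂ : ∀ s, H₂ s ∈ Set.Icc (0:ℝ) 1) (hH₃ : ∀ s, H₃ s ∈ Set.Icc (0:ℝ) 1)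
    (y₃ y₄ y₅ y₇ : ℝ → ℝ) (hy₃c : Continuous y₃) (hy₄c : Continuous y₄) (hy₇c : Continuous y₇)
    (hy₃ : ∀ t, 0 ≤ t → y₃ t ∈ Set.Icc 0 M₃)
    (hode : ∀ t, 0 ≤ t → HasDerivAt y₅
      ((k₈ + k₉ * H₁ (y₄ t)) * H₂ (y₅ t) * H₃ (y₇ t) * y₃ t - k₃ * (y₅ t - q₅)) t)
    (h0 : 0 ≤ y₅ 0 ∧ y₅ 0 ≤ q₅ + (k₈ + k₉) * M₃ / k₃) :
    ∀ t, 0 ≤ t → y₅ t ∈ Set.Icc (min (y₅ 0) q₅) (q₅ + (k₈ + k₉) * M₃ / k₃) :=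
  il6_boundedness_general k₃ k₈ k₉ q₅ M₃ hk₃ hk₈ hk₉ H₁ H₂ H₃ hH₁ hH₂ hH₃ y₃ y₄ y₅ y₇ hy₃ hode h0
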